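/- arXiv:1606.08184 — 2 statements merged into one kernel-verified Lean document; each statement's English description precedes it below -/
import Mathlib

section
/- Let G and H be connected simple graphs such that every automorphism of G[H] is of wreath form. Define y_0 = 1, y_1 = D(H), and for m ≥ 2, y_m = D(H) + Σ_{i=1}^{m−1} C(m−1, i)·C(D(H), i+1), and let M = min{ k : Σ_{m=0}^{k} y_m ≥ D(G) }. Then D(H) ≤ D(G[H]) ≤ D(H) + M. -/
open SimpleGraph

/-- The lexicographic product of two simple graphs. -/
def lexProd {V W : Type*} (G : SimpleGraph V) (H : SimpleGraph W) :
    SimpleGraph (V × W) where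
  Adj p q := G.Adj p.1 q.1 ∨ (p.1 = q.1 ∧ H.Adj p.2 q.2)
  symm := by
    constructor
    rintro p q (h | ⟨h1, h2⟩)
    · exact Or.inl h.symm
    · exact Or.inr ⟨h1.symm, h2.symm⟩
  loopless := by
    constructor
    rintro p (h | ⟨_, h⟩)
    · exact G.irrefl h
    · exact H.irrefl h

/-- The distinguishing number: the least `d` such that there is a vertex labeling with `d`
labels preserved only by the identity automorphism. -/
noncomputable def distinguishingNumber {V : Type*} (G : SimpleGraph V) : ℕ :=
  sInf {d : ℕ | ∃ φ : V → Fin d,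
    ∀ σ : G ≃g G, (∀ v, φ (σ v) = φ v) → ∀ v, σ v = v}

/-- The distinguishing index: the least `d` such that there is an edge labeling with `d`
labels preserved only by the identity automorphism. -/
noncomputable def distinguishingIndex {V : Type*} (G : SimpleGraph V) : ℕ :=
  sInf {d : ℕ | ∃ ψ : G.edgeSet → Fin d,
    ∀ σ : G ≃g G, (∀ e, ψ (σ.mapEdgeSet e) = ψ e) → ∀ v, σ v = v}

/-- Every automorphism of `G[H]` is of wreath form, i.e. `Aut(G[H]) = Aut(G)[Aut(H)]`. -/
def wreathForm {V W : Type*} (G : SimpleGraph V) (H : SimpleGraph W) : Prop :=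
  ∀ f : lexProd G H ≃g lexProd G H,
    ∃ (α : G ≃g G) (β : V → (H ≃g H)),
      ∀ p : V × W, f p = (α p.1, β (α p.1) p.2)
/-- The sequence `y_m` from the theorem: `y_0 = 1`, `y_1 = D(H)`, and for `m ≥ 2`,
`y_m = D(H) + Σ_{i=1}^{m-1} C(m-1,i) C(D(H), i+1)`, where `DH` stands for `D(H)`. -/
def yFun (DH : ℕ) : ℕ → ℕ
  | 0 => 1
  | 1 => DH
  | (n+2) => DH + ∑ i ∈ Finset.Icc 1 (n+1), Nat.choose (n+1) i * Nat.choose DH (i+1)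

/-!
A distinguishing colouring of `G[H]` is built fibrewise: the fibre over `g` is coloured by a
minimal distinguishing colouring of `H` (which uses all `D(H)` colours) relabelled injectively
into `D(H) + k` colours, with the relabelling chosen according to the colour of `g` in a
distinguishing colouring of `G`. Fibre colourings with different colour sets cannot be exchanged
by an automorphism of wreath form, and there are `C(D(H) + k, D(H))` colour sets of size `D(H)`,
so this works as soon as `D(G) ≤ C(D(H) + k, k)`. By Vandermonde `y_{m+1} = C(D(H) + m, m + 1)`,
and then Pascal's rule gives `∑_{m ≤ k} y_m = C(D(H) + k, k)`.
-/

open Finset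

section

variable {V W α β : Type*}

def IsDistinguishingColoring (G : SimpleGraph V) (φ : V → α) : Prop :=
  ∀ σ : G ≃g G, (∀ v, φ (σ v) = φ v) → ∀ v, σ v = v

namespace IsDistinguishingColoring

variable {G : SimpleGraph V} {φ : V → α}

theorem of_comp {f : α → β} (h : IsDistinguishingColoring G (f ∘ φ)) :
    IsDistinguishingColoring G φ :=
  fun σ hσ => h σ fun v => congrArg f (hσ v)

theorem comp (h : IsDistinguishingColoring G φ) {f : α → β} (hf : Function.Injective f) :
    IsDistinguishingColoring G (f ∘ φ) :=
  fun σ hσ => h σ fun v => hf (hσ v)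

end IsDistinguishingColoring

section DistinguishingNumber

variable (G : SimpleGraph V)

theorem distinguishingNumber_le {d : ℕ} (φ : V → Fin d) (hφ : IsDistinguishingColoring G φ) :
    distinguishingNumber G ≤ d :=
  Nat.sInf_le ⟨φ, hφ⟩

theorem exists_isDistinguishingColoring [Finite V] :
    ∃ φ : V → Fin (distinguishingNumber G), IsDistinguishingColoring G φ :=
  Nat.sInf_mem (s := {d | ∃ φ : V → Fin d, IsDistinguishingColoring G φ})
    ⟨Nat.card V, Finite.equivFin V, fun _ h v => (Finite.equivFin V).injective (h v)⟩

theorem distinguishingNumber_le_card_range [Finite α] (φ : V → α)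
    (hφ : IsDistinguishingColoring G φ) : distinguishingNumber G ≤ (Set.range φ).ncard :=
  distinguishingNumber_le G _ <|
    (hφ.of_comp (f := Subtype.val) (φ := Set.rangeFactorization φ)).comp
      (Finite.equivFin (Set.range φ)).injective

variable {G} in
theorem IsDistinguishingColoring.surjective {φ : V → Fin (distinguishingNumber G)}
    (hφ : IsDistinguishingColoring G φ) : Function.Surjective φ := by
  refine Set.range_eq_univ.mp <| Set.eq_of_subset_of_ncard_le (Set.subset_univ _) ?_
  rw [Set.ncard_univ, Nat.card_fin]
  exact distinguishingNumber_le_card_range G φ hφ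

theorem one_le_distinguishingNumber [Finite V] [Nonempty V] : 1 ≤ distinguishingNumber G :=
  let ⟨φ, _⟩ := exists_isDistinguishingColoring G
  (φ (Classical.arbitrary V)).pos

end DistinguishingNumber

section LexProd

variable (G : SimpleGraph V) (H : SimpleGraph W)

def lexProdFiberIso [DecidableEq V] (g₀ : V) (σ : H ≃g H) : lexProd G H ≃g lexProd G H where
  toFun p := (p.1, if p.1 = g₀ then σ p.2 else p.2)
  invFun p := (p.1, if p.1 = g₀ then σ.symm p.2 else p.2)
  left_inv := fun ⟨g, w⟩ => by by_cases h : g = g₀ <;> simp [h]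
  right_inv := fun ⟨g, w⟩ => by by_cases h : g = g₀ <;> simp [h]
  map_rel_iff' {p q} := by
    obtain ⟨g, w⟩ := p
    obtain ⟨g', w'⟩ := q
    change G.Adj g g' ∨ (g = g' ∧ H.Adj _ _) ↔ G.Adj g g' ∨ (g = g' ∧ H.Adj w w')
    by_cases hg : g = g'
    · subst hg
      by_cases h : g = g₀ <;> simp [h, σ.map_rel_iff]
    · simp [hg]

theorem distinguishingNumber_le_distinguishingNumber_lexProd [Finite V] [Finite W] [Nonempty V] :
    distinguishingNumber H ≤ distinguishingNumber (lexProd G H) := by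
  classical
  let g₀ := Classical.arbitrary V
  obtain ⟨φ, hφ⟩ := exists_isDistinguishingColoring (lexProd G H)
  refine distinguishingNumber_le H (fun w => φ (g₀, w)) fun σ hσ w => ?_
  have hfix : ∀ p, φ (lexProdFiberIso G H g₀ σ p) = φ p := by
    rintro ⟨g, w⟩
    by_cases hg : g = g₀
    · subst hg; simpa [lexProdFiberIso] using hσ w
    · simp [lexProdFiberIso, hg]
  simpa [lexProdFiberIso] using hφ _ hfix (g₀, w)

variable {G H}

/-- The colour set of a fibre is invariant under automorphisms of `H`, so an automorphism of
wreath form preserving this colouring must preserve `φ`. -/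
theorem IsDistinguishingColoring.lexProd (hw : wreathForm G H) {φ : V → α}
    (hφ : IsDistinguishingColoring G φ) {ψ : α → W → β}
    (hψ : ∀ a, IsDistinguishingColoring H (ψ a))
    (hψr : Function.Injective fun a => Set.range (ψ a)) :
    IsDistinguishingColoring (lexProd G H) fun p => ψ (φ p.1) p.2 := by
  intro σ hσ p
  obtain ⟨a, b, hab⟩ := hw σ
  have hfiber : ∀ g w, ψ (φ (a g)) (b (a g) w) = ψ (φ g) w := fun g w => by
    simpa [hab] using hσ (g, w)
  have ha : ∀ g, a g = g := hφ a fun g => hψr <| by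
    change Set.range _ = Set.range _
    rw [← (b (a g)).surjective.range_comp]
    exact congrArg Set.range (funext (hfiber g))
  have hb : ∀ g w, b g w = w := fun g => hψ (φ g) (b g) fun w => by
    simpa [ha] using hfiber g w
  rw [hab, ha, hb]

theorem distinguishingNumber_lexProd_le [Finite V] [Finite W] (hw : wreathForm G H) {k : ℕ}
    (hk : distinguishingNumber G ≤ (distinguishingNumber H + k).choose k) :
    distinguishingNumber (lexProd G H) ≤ distinguishingNumber H + k := by
  set d := distinguishingNumber H
  obtain ⟨φ, hφ⟩ := exists_isDistinguishingColoring G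
  obtain ⟨χ, hχ⟩ := exists_isDistinguishingColoring H
  obtain ⟨e⟩ : Nonempty (Fin (distinguishingNumber G) ↪ {R : Finset (Fin (d + k)) // #R = d}) :=
    Function.Embedding.nonempty_of_card_le (by simpa [Nat.choose_symm_add] using hk)
  -- fibre colourings: `χ` followed by the increasing bijection onto a `d`-subset of the colours
  let ψ a w := (e a).1.orderEmbOfFin (e a).2 (χ w)
  have hrange : ∀ a, Set.range (ψ a) = (e a).1 := fun a => by
    rw [← Finset.range_orderEmbOfFin _ (e a).2, ← hχ.surjective.range_comp]
    rfl
  refine distinguishingNumber_le _ _ <| hφ.lexProd hw (ψ := ψ)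
    (fun a => hχ.comp ((e a).1.orderEmbOfFin (e a).2).injective) fun a a' h => ?_
  exact e.injective <| Subtype.ext <| by
    exact_mod_cast (hrange a).symm.trans (h.trans (hrange a'))

end LexProd

theorem sum_range_choose_mul_choose_succ (n d : ℕ) :
    ∑ i ∈ range (n + 1), n.choose i * d.choose (i + 1) = (d + n).choose (n + 1) := by
  rw [Nat.add_choose_eq, Nat.sum_antidiagonal_eq_sum_range_succ fun a b => d.choose a * n.choose b,
    sum_range_succ' (fun a => d.choose a * n.choose (n + 1 - a)), Nat.sub_zero,
    Nat.choose_eq_zero_of_lt (Nat.lt_succ_self n), mul_zero, add_zero]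
  refine sum_congr rfl fun i hi => ?_
  rw [Nat.succ_sub_succ, Nat.choose_symm (mem_range_succ_iff.mp hi), mul_comm]

theorem yFun_succ (d k : ℕ) : yFun d (k + 1) = (d + k).choose (k + 1) := by
  rcases k with _ | n
  · simp [yFun]
  · rw [← sum_range_choose_mul_choose_succ, range_eq_Ico,
      sum_eq_sum_Ico_succ_bot (Nat.succ_pos _), Nat.succ_eq_add_one, Ico_add_one_right_eq_Icc]
    simp [yFun]

theorem sum_range_yFun (d k : ℕ) : ∑ m ∈ range (k + 1), yFun d m = (d + k).choose k := by
  induction k with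
  | zero => simp [yFun]
  | succ k ih => rw [sum_range_succ, ih, yFun_succ, ← add_assoc, Nat.choose_succ_succ']

theorem le_add_choose_self {d : ℕ} (hd : 1 ≤ d) (n : ℕ) : n ≤ (d + n).choose n :=
  calc n ≤ (n + 1).choose n := (Nat.choose_succ_self_right n).ge.trans' n.le_succ
    _ ≤ (d + n).choose n := Nat.choose_le_choose n (by omega)

end

theorem stmt2 {V W : Type*} [Fintype V] [Fintype W]
    (G : SimpleGraph V) (H : SimpleGraph W)
    (hG : G.Connected) (hH : H.Connected) (hw : wreathForm G H) :
    distinguishingNumber H ≤ distinguishingNumber (lexProd G H) ∧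
    distinguishingNumber (lexProd G H) ≤ distinguishingNumber H +
      sInf {k : ℕ | distinguishingNumber G ≤
        ∑ m ∈ Finset.range (k + 1), yFun (distinguishingNumber H) m} := by
  have := hG.nonempty
  have := hH.nonempty
  simp_rw [sum_range_yFun]
  refine ⟨distinguishingNumber_le_distinguishingNumber_lexProd G H,
    distinguishingNumber_lexProd_le hw ?_⟩
  exact Nat.sInf_mem (s := {k | _ ≤ (_ + k).choose k})
    ⟨_, le_add_choose_self (one_le_distinguishingNumber H) _⟩
end

section
/- For every n ≥ 3, the distinguishing number of the spider graph G_n equals ⌈√n⌉. -/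
/-!
An automorphism of the spider fixes the centre, the only vertex of degree `n ≥ 3`, so it
permutes the legs `c – mᵢ – lᵢ` as whole units. Hence a labeling is distinguishing exactly
when the legs receive pairwise distinct label pairs `(φ mᵢ, φ lᵢ)`; with `d` labels there are
`d²` such pairs, so `d` labels suffice iff `n ≤ d²`.
-/

open SimpleGraph

/-- The spider graph: the star `K_{1,n}` with every edge subdivided. -/
def spider (n : ℕ) : SimpleGraph (Unit ⊕ Fin n ⊕ Fin n) :=
  SimpleGraph.fromRel (fun a b =>
    (∃ i : Fin n, a = Sum.inl () ∧ b = Sum.inr (Sum.inl i)) ∨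
    (∃ i : Fin n, a = Sum.inr (Sum.inl i) ∧ b = Sum.inr (Sum.inr i)))

section Distinguishing

variable {V : Type*}

def IsDistinguishing {α : Type*} (G : SimpleGraph V) (φ : V → α) : Prop :=
  ∀ σ : G ≃g G, (∀ v, φ (σ v) = φ v) → ∀ v, σ v = v

theorem distinguishingNumber_eq_sInf (G : SimpleGraph V) :
    distinguishingNumber G = sInf {d | ∃ φ : V → Fin d, IsDistinguishing G φ} :=
  rfl

theorem SimpleGraph.Iso.ncard_neighborSet {W : Type*} {G : SimpleGraph V} {H : SimpleGraph W}
    (σ : G ≃g H) (v : V) : (H.neighborSet (σ v)).ncard = (G.neighborSet v).ncard := by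
  rw [← σ.image_neighborSet, Set.ncard_image_of_injective _ σ.injective]

end Distinguishing

namespace spider

variable {n : ℕ}

abbrev center : Unit ⊕ Fin n ⊕ Fin n := .inl ()

abbrev middle (i : Fin n) : Unit ⊕ Fin n ⊕ Fin n := .inr (.inl i)

abbrev leaf (i : Fin n) : Unit ⊕ Fin n ⊕ Fin n := .inr (.inr i)

theorem neighborSet_center : (spider n).neighborSet center = Set.range middle := by
  ext (_ | _ | _) <;> simp [spider]

theorem neighborSet_middle (i : Fin n) :
    (spider n).neighborSet (middle i) = {center, leaf i} := by
  ext (_ | _ | _) <;> simp [spider, eq_comm]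

theorem neighborSet_leaf (i : Fin n) : (spider n).neighborSet (leaf i) = {middle i} := by
  ext (_ | _ | _) <;> simp [spider, eq_comm]

theorem ncard_neighborSet_center : ((spider n).neighborSet center).ncard = n := by
  rw [neighborSet_center, Set.ncard_range_of_injective, Nat.card_fin]
  intro i j h
  simpa using h

theorem ncard_neighborSet_le_two {x : Unit ⊕ Fin n ⊕ Fin n} (hx : x ≠ center) :
    ((spider n).neighborSet x).ncard ≤ 2 := by
  rcases x with _ | i | i
  · exact absurd rfl hx
  · rw [neighborSet_middle]
    exact (Set.ncard_insert_le _ _).trans (by simp)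
  · simp [neighborSet_leaf]

theorem aut_apply_center (hn : 3 ≤ n) (σ : spider n ≃g spider n) : σ center = center := by
  by_contra h
  have := ncard_neighborSet_le_two h
  rw [σ.ncard_neighborSet, ncard_neighborSet_center] at this
  omega

theorem exists_aut_apply_leg (hn : 3 ≤ n) (σ : spider n ≃g spider n) (i : Fin n) :
    ∃ j, σ (middle i) = middle j ∧ σ (leaf i) = leaf j := by
  have hm : σ (middle i) ∈ Set.range middle := by
    rw [← neighborSet_center, ← aut_apply_center hn σ, σ.apply_mem_neighborSet_iff,
      neighborSet_center]
    exact ⟨i, rfl⟩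
  obtain ⟨j, hj⟩ := hm
  refine ⟨j, hj.symm, ?_⟩
  have hl : σ (leaf i) ∈ (spider n).neighborSet (middle j) := by
    rw [hj, σ.apply_mem_neighborSet_iff, neighborSet_middle]
    simp
  rw [neighborSet_middle] at hl
  rcases hl with hcenter | hleaf
  · rw [← aut_apply_center hn σ] at hcenter
    simpa using σ.injective hcenter
  · exact hleaf

def legLabel {α : Type*} (φ : Unit ⊕ Fin n ⊕ Fin n → α) (i : Fin n) : α × α :=
  (φ (middle i), φ (leaf i))

def permLegs (π : Equiv.Perm (Fin n)) : spider n ≃g spider n where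
  toEquiv := Equiv.sumCongr (Equiv.refl Unit) (Equiv.sumCongr π π)
  map_rel_iff' := by
    rintro (_ | i | i) (_ | j | j) <;> simp [spider, π.injective.eq_iff]

theorem injective_legLabel {α : Type*} {φ : Unit ⊕ Fin n ⊕ Fin n → α}
    (hφ : IsDistinguishing (spider n) φ) : Function.Injective (legLabel φ) := by
  intro i j hij
  have hpres : ∀ v, φ (permLegs (Equiv.swap i j) v) = φ v := by
    rintro (_ | k | k)
    · rfl
    · exact Equiv.apply_swap_eq_self (v := fun k => φ (middle k)) (congrArg Prod.fst hij) k
    · exact Equiv.apply_swap_eq_self (v := fun k => φ (leaf k)) (congrArg Prod.snd hij) k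
  simpa [permLegs] using (hφ _ hpres (middle i)).symm

theorem isDistinguishing_of_injective_legLabel {α : Type*} (hn : 3 ≤ n)
    {φ : Unit ⊕ Fin n ⊕ Fin n → α} (hφ : Function.Injective (legLabel φ)) :
    IsDistinguishing (spider n) φ := by
  intro σ hσ v
  have hleg (i : Fin n) : σ (middle i) = middle i ∧ σ (leaf i) = leaf i := by
    obtain ⟨j, hm, hl⟩ := exists_aut_apply_leg hn σ i
    obtain rfl : j = i := hφ (by simp only [legLabel, ← hm, ← hl, hσ])
    exact ⟨hm, hl⟩
  rcases v with _ | i | i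
  · exact aut_apply_center hn σ
  · exact (hleg i).1
  · exact (hleg i).2

theorem exists_injective_legLabel_iff (hn : 0 < n) (d : ℕ) :
    (∃ φ : Unit ⊕ Fin n ⊕ Fin n → Fin d, Function.Injective (legLabel φ)) ↔ n ≤ d ^ 2 := by
  constructor
  · rintro ⟨φ, hφ⟩
    simpa [sq] using Fintype.card_le_of_injective _ hφ
  · intro hd
    have : NeZero d := ⟨by rintro rfl; omega⟩
    obtain ⟨f⟩ : Nonempty (Fin n ↪ Fin d × Fin d) :=
      Function.Embedding.nonempty_of_card_le (by simpa [sq] using hd)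
    exact ⟨Sum.elim (fun _ => 0) (Sum.elim (fun i => (f i).1) (fun i => (f i).2)),
      fun i j h => f.injective h⟩

end spider

theorem stmt3 (n : ℕ) (hn : 3 ≤ n) :
    distinguishingNumber (spider n) = sInf {r : ℕ | n ≤ r ^ 2} := by
  rw [distinguishingNumber_eq_sInf]
  congr 1
  exact Set.ext fun d =>
    (exists_congr fun φ =>
      ⟨spider.injective_legLabel, spider.isDistinguishing_of_injective_legLabel hn⟩).trans
    (spider.exists_injective_legLabel_iff (by omega) d)
end
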